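/- arXiv:2512.08677 — 2 statements merged into one kernel-verified Lean document; each statement's English description precedes it below -/
import Mathlib

section
/- A homeomorphism f of a compact metric space has the L-shadowing property if and only if it has the shadowing property and satisfies the asymptotic local-product-structure: for each ε > 0 there is δ > 0 such that d(x,y) ≤ δ implies V^s_ε(x) ∩ V^u_ε(y) ≠ ∅. -/
open Topology Filter Metric TopologicalSpace

namespace LS

variable {X Y : Type*} [MetricSpace X] [MetricSpace Y]

/-- finite forward iterates of a homeomorphism -/
def hpowAux (f : X ≃ₜ X) : ℕ → X ≃ₜ X
  | 0 => Homeomorph.refl X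
  | n+1 => (hpowAux f n).trans f

/-- `ℤ`-iterates of a homeomorphism: `hpow f k` is the `k`-th iterate `f^k`. -/
def hpow (f : X ≃ₜ X) : ℤ → X ≃ₜ X
  | Int.ofNat n => hpowAux f n
  | Int.negSucc n => (hpowAux f (n+1)).symm

/-- the `ℤ`-iteration map of `f` -/
def F (f : X ≃ₜ X) : ℤ → X → X := fun k => hpow f k

/-- δ-limit-pseudo-orbit for a system given by its iterate family `T` -/
def IsLimitPseudoOrbit (T : ℤ → Y → Y) (δ : ℝ) (x : ℤ → Y) : Prop :=
  (∀ k : ℤ, dist (T 1 (x k)) (x (k+1)) ≤ δ) ∧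
  Tendsto (fun k : ℤ => dist (T 1 (x k)) (x (k+1))) (cocompact ℤ) (𝓝 0)

/-- `z` ε-limit-shadows the sequence `x` -/
def LimitShadows (T : ℤ → Y → Y) (ε : ℝ) (x : ℤ → Y) (z : Y) : Prop :=
  (∀ k : ℤ, dist (T k z) (x k) ≤ ε) ∧
  Tendsto (fun k : ℤ => dist (T k z) (x k)) (cocompact ℤ) (𝓝 0)

/-- the L-shadowing property -/
def LShadowing (T : ℤ → Y → Y) : Prop :=
  ∀ ε > (0:ℝ), ∃ δ > (0:ℝ), ∀ x : ℤ → Y, IsLimitPseudoOrbit T δ x → ∃ z, LimitShadows T ε x z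

/-- the shadowing property -/
def Shadowing (T : ℤ → Y → Y) : Prop :=
  ∀ ε > (0:ℝ), ∃ δ > (0:ℝ), ∀ x : ℤ → Y,
    (∀ k : ℤ, dist (T 1 (x k)) (x (k+1)) < δ) → ∃ z, ∀ k : ℤ, dist (T k z) (x k) < ε

/-- local c-stable set -/
def Ws (f : X ≃ₜ X) (c : ℝ) (x : X) : Set X :=
  {y | ∀ k : ℤ, 0 ≤ k → dist (F f k y) (F f k x) ≤ c}

/-- local c-unstable set -/
def Wu (f : X ≃ₜ X) (c : ℝ) (x : X) : Set X :=
  {y | ∀ k : ℤ, k ≤ 0 → dist (F f k y) (F f k x) ≤ c}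

/-- stable set -/
def WsA (f : X ≃ₜ X) (x : X) : Set X :=
  {y | Tendsto (fun k : ℤ => dist (F f k y) (F f k x)) atTop (𝓝 0)}

/-- unstable set -/
def WuA (f : X ≃ₜ X) (x : X) : Set X :=
  {y | Tendsto (fun k : ℤ => dist (F f k y) (F f k x)) atBot (𝓝 0)}

/-- asymptotic local stable set -/
def Vs (f : X ≃ₜ X) (c : ℝ) (x : X) : Set X := WsA f x ∩ Ws f c x

/-- asymptotic local unstable set -/
def Vu (f : X ≃ₜ X) (c : ℝ) (x : X) : Set X := WuA f x ∩ Wu f c x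

/-- image of a nonempty compact set under a homeomorphism -/
def himg (f : X ≃ₜ X) (A : NonemptyCompacts X) : NonemptyCompacts X :=
  ⟨⟨f '' A, A.isCompact.image f.continuous⟩, A.nonempty.image f⟩

/-- the `ℤ`-iteration family of the induced hyperspace map `2^f` -/
def HF (f : X ≃ₜ X) : ℤ → NonemptyCompacts X → NonemptyCompacts X :=
  fun k A => himg (hpow f k) A

end LS

/-!
Shadowing and the asymptotic local product structure give L-shadowing: shadow the whole limit
pseudo-orbit once, then repeatedly shadow its two tails, where the jumps are ever smaller, with ever
better precision, and splice each tail shadow into the current point by the local product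
structure. A splice at a time where the current orbit is already asymptotically close to the
pseudo-orbit moves the orbit uniformly by a geometrically decreasing amount, so the points converge
to one whose orbit shadows the pseudo-orbit and is asymptotic to it at both ends.

Conversely, the limit pseudo-orbit that follows the orbit of `y` up to time `-1` and the orbit of
`x` from time `0` on is limit-shadowed by a point of `Vˢ(x) ∩ Vᵘ(y)`, and shadowing follows from
L-shadowing of the truncations of a pseudo-orbit together with compactness.
-/

namespace LS

variable {X : Type*} [MetricSpace X]

section Iterates

variable (f : X ≃ₜ X)

theorem hpow_eq_zpow (k : ℤ) : hpow f k = f ^ k := by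
  have hAux : ∀ n : ℕ, hpowAux f n = f ^ n := fun n => by
    induction n with
    | zero => rfl
    | succ n ih => rw [pow_succ', ← ih]; rfl
  cases k with
  | ofNat n => exact hAux n
  | negSucc n => rw [zpow_negSucc, ← hAux]; rfl

theorem F_apply (k : ℤ) (x : X) : F f k x = (f ^ k) x := by
  rw [← hpow_eq_zpow]; rfl

@[simp]
theorem F_zero (x : X) : F f 0 x = x := by simp [F_apply]

theorem F_add (a b : ℤ) (x : X) : F f (a + b) x = F f a (F f b x) := by
  simp [F_apply, zpow_add]

theorem F_one_F (k : ℤ) (x : X) : F f 1 (F f k x) = F f (k + 1) x := by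
  rw [← F_add, add_comm]

theorem continuous_F (k : ℤ) : Continuous (F f k) := (hpow f k).continuous

end Iterates

theorem eventually_dist_le_add_of_tendsto {α : Type*} {l : Filter α} {u v w : α → X} {a b : ℝ}
    (huv : Tendsto (fun k => dist (u k) (v k)) l (𝓝 0)) (hb : 0 < b)
    (hvw : ∀ᶠ k in l, dist (v k) (w k) ≤ a) : ∀ᶠ k in l, dist (u k) (w k) ≤ b + a := by
  filter_upwards [huv.eventually (ge_mem_nhds hb), hvw] with k h₁ h₂
  exact (dist_triangle _ _ _).trans (add_le_add h₁ h₂)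

theorem tendsto_zero_of_forall_eventually_le {α : Type*} {l : Filter α} {g : α → ℝ} {b : ℕ → ℝ}
    (hg : ∀ a, 0 ≤ g a) (hb : Tendsto b atTop (𝓝 0)) (h : ∀ n, ∀ᶠ a in l, g a ≤ b n) :
    Tendsto g l (𝓝 0) := by
  refine tendsto_order.2 ⟨fun c hc => Eventually.of_forall fun a => hc.trans_le (hg a),
    fun c hc => ?_⟩
  obtain ⟨n, hn⟩ := (hb.eventually (gt_mem_nhds hc)).exists
  exact (h n).mono fun a ha => ha.trans_lt hn

def AsympLocalProductAt (f : X ≃ₜ X) (ε δ : ℝ) : Prop :=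
  ∀ x y : X, dist x y ≤ δ → (Vs f ε x ∩ Vu f ε y).Nonempty

def HasAsympLocalProduct (f : X ≃ₜ X) : Prop :=
  ∀ ε > (0:ℝ), ∃ δ > (0:ℝ), AsympLocalProductAt f ε δ

/-- For `g` a clamp to an interval, this truncates `x` to true orbits outside the interval. -/
def frozen (f : X ≃ₜ X) (x : ℤ → X) (g : ℤ → ℤ) (k : ℤ) : X := F f (k - g k) (x (g k))

section Frozen

variable {f : X ≃ₜ X} {x : ℤ → X} {g : ℤ → ℤ} {k : ℤ}

theorem frozen_of_eq (h : g k = k) : frozen f x g k = x k := by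
  simp [frozen, h]

theorem dist_frozen_succ_of_eq (h : g (k + 1) = g k) :
    dist (F f 1 (frozen f x g k)) (frozen f x g (k + 1)) = 0 := by
  rw [frozen, frozen, F_one_F, h, sub_add_eq_add_sub, dist_self]

theorem isLimitPseudoOrbit_frozen_clamp {δ : ℝ} (hδ : 0 ≤ δ)
    (hx : ∀ k, dist (F f 1 (x k)) (x (k + 1)) ≤ δ) (n : ℕ) :
    IsLimitPseudoOrbit (F f) δ (frozen f x fun k => max (-n) (min k n)) := by
  have hzero : ∀ k : ℤ, k < -n ∨ n ≤ k →
      dist (F f 1 (frozen f x (fun k => max (-n) (min k n)) k))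
        (frozen f x (fun k => max (-n) (min k n)) (k + 1)) = 0 :=
    fun k hk => dist_frozen_succ_of_eq (by omega)
  refine ⟨fun k => ?_, tendsto_const_nhds.congr' ?_⟩
  · by_cases hk : k < -n ∨ n ≤ k
    · rw [hzero k hk]; exact hδ
    · rw [frozen_of_eq (by omega), frozen_of_eq (by omega)]; exact hx k
  · rw [cocompact_eq_cofinite]
    filter_upwards [(Set.finite_Ico (-(n : ℤ)) n).eventually_cofinite_notMem] with k hk
    rw [Set.mem_Ico] at hk
    exact (hzero k (by omega)).symm

end Frozen

theorem isLimitPseudoOrbit_join {f : X ≃ₜ X} {x y : X} {δ : ℝ} (hyx : dist y x ≤ δ) :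
    IsLimitPseudoOrbit (F f) δ fun k => F f k (if k < 0 then y else x) := by
  have hzero : ∀ k : ℤ, k ≠ -1 →
      dist (F f 1 (F f k (if k < 0 then y else x))) (F f (k + 1) (if k + 1 < 0 then y else x))
        = 0 := fun k hk => by
    rw [F_one_F, show (if k < 0 then y else x) = if k + 1 < 0 then y else x by
      split_ifs <;> first | rfl | omega, dist_self]
  refine ⟨fun k => ?_, tendsto_const_nhds.congr' ?_⟩
  · rcases eq_or_ne k (-1) with rfl | hk
    · simpa [F_one_F] using hyx
    · rw [hzero k hk]; exact dist_nonneg.trans hyx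
  · rw [cocompact_eq_cofinite]
    filter_upwards [eventually_cofinite_ne (-1)] with k hk using (hzero k hk).symm

section Shadowing

variable {f : X ≃ₜ X}

theorem exists_eventually_shadow_atTop (hsh : Shadowing (F f)) {x : ℤ → X}
    (hx : Tendsto (fun k => dist (F f 1 (x k)) (x (k + 1))) atTop (𝓝 0)) {τ : ℝ} (hτ : 0 < τ) :
    ∃ p, ∀ᶠ k in atTop, dist (F f k p) (x k) < τ := by
  obtain ⟨δ, hδ, hshδ⟩ := hsh τ hτ
  obtain ⟨K, hK⟩ := eventually_atTop.1 (hx.eventually (gt_mem_nhds hδ))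
  obtain ⟨p, hp⟩ := hshδ (frozen f x (max · K)) fun k => by
    rcases lt_or_ge k K with hk | hk
    · rw [dist_frozen_succ_of_eq (by omega)]; exact hδ
    · rw [frozen_of_eq (by omega), frozen_of_eq (by omega)]; exact hK k hk
  refine ⟨p, ?_⟩
  filter_upwards [eventually_ge_atTop K] with k hk
  rw [← frozen_of_eq (f := f) (x := x) (g := (max · K)) (by omega)]
  exact hp k

theorem exists_eventually_shadow_atBot (hsh : Shadowing (F f)) {x : ℤ → X}
    (hx : Tendsto (fun k => dist (F f 1 (x k)) (x (k + 1))) atBot (𝓝 0)) {τ : ℝ} (hτ : 0 < τ) :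
    ∃ q, ∀ᶠ k in atBot, dist (F f k q) (x k) < τ := by
  obtain ⟨δ, hδ, hshδ⟩ := hsh τ hτ
  obtain ⟨K, hK⟩ := eventually_atBot.1 (hx.eventually (gt_mem_nhds hδ))
  obtain ⟨q, hq⟩ := hshδ (frozen f x (min · K)) fun k => by
    rcases lt_or_ge k K with hk | hk
    · rw [frozen_of_eq (by omega), frozen_of_eq (by omega)]; exact hK k hk.le
    · rw [dist_frozen_succ_of_eq (by omega)]; exact hδ
  refine ⟨q, ?_⟩
  filter_upwards [eventually_le_atBot K] with k hk
  rw [← frozen_of_eq (f := f) (x := x) (g := (min · K)) (by omega)]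
  exact hq k

end Shadowing

section Gluing

variable {f : X ≃ₜ X} {θ β : ℝ}

theorem exists_glue (hβ : AsympLocalProductAt f θ β)
    {a b : X} {M : ℤ} (hab : dist (F f M a) (F f M b) ≤ β) :
    ∃ y, (∀ k ≤ M, dist (F f k y) (F f k a) ≤ θ) ∧ (∀ k ≥ M, dist (F f k y) (F f k b) ≤ θ) ∧
      Tendsto (fun k => dist (F f k y) (F f k a)) atBot (𝓝 0) ∧
      Tendsto (fun k => dist (F f k y) (F f k b)) atTop (𝓝 0) := by
  obtain ⟨c, ⟨hsA, hs⟩, huA, hu⟩ := hβ (F f M b) (F f M a) (by rwa [dist_comm])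
  have hshift : ∀ k p, dist (F f k (F f (-M) c)) (F f k p) =
      dist (F f (k + -M) c) (F f (k + -M) (F f M p)) := fun k p => by
    rw [← F_add, ← F_add, neg_add_cancel_right]
  refine ⟨F f (-M) c, fun k hk => ?_, fun k hk => ?_, ?_, ?_⟩
  · rw [hshift]; exact hu _ (by omega)
  · rw [hshift]; exact hs _ (by omega)
  · simp only [hshift]
    exact huA.comp (tendsto_atBot_add_const_right _ (-M) tendsto_id)
  · simp only [hshift]
    exact hsA.comp (tendsto_atTop_add_const_right _ (-M) tendsto_id)

end Gluing

section Refine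

variable {f : X ≃ₜ X} {θ β τ : ℝ} {x : ℤ → X}

theorem exists_refine_atTop (hsh : Shadowing (F f))
    (hx : Tendsto (fun k => dist (F f 1 (x k)) (x (k + 1))) atTop (𝓝 0))
    (hβ : AsympLocalProductAt f θ β) (hβθ : β ≤ θ) (hτ : 0 < τ) (hτβ : τ ≤ β / 3) {y : X}
    (hy : ∀ᶠ k in atTop, dist (F f k y) (x k) ≤ 2 * β / 3) :
    ∃ y', (∀ k, dist (F f k y') (F f k y) ≤ 2 * θ) ∧
      (∀ᶠ k in atTop, dist (F f k y') (x k) ≤ τ + τ) ∧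
      Tendsto (fun k => dist (F f k y') (F f k y)) atBot (𝓝 0) := by
  obtain ⟨p, hp⟩ := exists_eventually_shadow_atTop hsh hx hτ
  obtain ⟨M, hM⟩ := eventually_atTop.1 (hp.and hy)
  obtain ⟨y', hpast, hfut, hpastT, hfutT⟩ := exists_glue hβ (a := y) (b := p) (M := M) <| by
    calc dist (F f M y) (F f M p) ≤ dist (F f M y) (x M) + dist (F f M p) (x M) :=
          dist_triangle_right _ _ _
      _ ≤ 2 * β / 3 + τ := add_le_add (hM M le_rfl).2 (hM M le_rfl).1.le
      _ ≤ β := by linarith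
  refine ⟨y', fun k => ?_, eventually_dist_le_add_of_tendsto hfutT hτ (hp.mono fun k h => h.le),
    hpastT⟩
  rcases le_total k M with hk | hk
  · linarith [hpast k hk, dist_nonneg.trans (hpast k hk)]
  · calc dist (F f k y') (F f k y)
        ≤ dist (F f k y') (F f k p) + dist (F f k p) (x k) + dist (x k) (F f k y) :=
          dist_triangle4 _ _ _ _
      _ ≤ θ + τ + 2 * β / 3 := add_le_add (add_le_add (hfut k hk) (hM k hk).1.le)
        ((dist_comm _ _).trans_le (hM k hk).2)
      _ ≤ 2 * θ := by linarith

theorem exists_refine_atBot (hsh : Shadowing (F f))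
    (hx : Tendsto (fun k => dist (F f 1 (x k)) (x (k + 1))) atBot (𝓝 0))
    (hβ : AsympLocalProductAt f θ β) (hβθ : β ≤ θ) (hτ : 0 < τ) (hτβ : τ ≤ β / 3) {y : X}
    (hy : ∀ᶠ k in atBot, dist (F f k y) (x k) ≤ 2 * β / 3) :
    ∃ y', (∀ k, dist (F f k y') (F f k y) ≤ 2 * θ) ∧
      (∀ᶠ k in atBot, dist (F f k y') (x k) ≤ τ + τ) ∧
      Tendsto (fun k => dist (F f k y') (F f k y)) atTop (𝓝 0) := by
  obtain ⟨q, hq⟩ := exists_eventually_shadow_atBot hsh hx hτ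
  obtain ⟨N, hN⟩ := eventually_atBot.1 (hq.and hy)
  obtain ⟨y', hpast, hfut, hpastT, hfutT⟩ := exists_glue hβ (a := q) (b := y) (M := N) <| by
    calc dist (F f N q) (F f N y) ≤ dist (F f N q) (x N) + dist (F f N y) (x N) :=
          dist_triangle_right _ _ _
      _ ≤ τ + 2 * β / 3 := add_le_add (hN N le_rfl).1.le (hN N le_rfl).2
      _ ≤ β := by linarith
  refine ⟨y', fun k => ?_, eventually_dist_le_add_of_tendsto hpastT hτ (hq.mono fun k h => h.le),
    hfutT⟩
  rcases le_total k N with hk | hk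
  · calc dist (F f k y') (F f k y)
        ≤ dist (F f k y') (F f k q) + dist (F f k q) (x k) + dist (x k) (F f k y) :=
          dist_triangle4 _ _ _ _
      _ ≤ θ + τ + 2 * β / 3 := add_le_add (add_le_add (hpast k hk) (hN k hk).1.le)
        ((dist_comm _ _).trans_le (hN k hk).2)
      _ ≤ 2 * θ := by linarith
  · linarith [hfut k hk, dist_nonneg.trans (hfut k hk)]

theorem exists_refine (hsh : Shadowing (F f))
    (hx : Tendsto (fun k => dist (F f 1 (x k)) (x (k + 1))) (cocompact ℤ) (𝓝 0))
    (hβ : AsympLocalProductAt f θ β) (hβθ : β ≤ θ) (hτ : 0 < τ) (hτβ : τ ≤ β / 3) {y : X}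
    (hy : ∀ᶠ k in cocompact ℤ, dist (F f k y) (x k) ≤ β / 3) :
    ∃ y', (∀ᶠ k in cocompact ℤ, dist (F f k y') (x k) ≤ 3 * τ) ∧
      ∀ k, dist (F f k y') (F f k y) ≤ 4 * θ := by
  rw [cocompact_eq_atBot_atTop, tendsto_sup] at hx
  rw [cocompact_eq_atBot_atTop, eventually_sup] at hy
  obtain ⟨y₁, hy₁, hy₁top, hy₁bot⟩ :=
    exists_refine_atTop (y := y) hsh hx.2 hβ hβθ hτ hτβ (hy.2.mono fun k h => by linarith)
  have hy₁' : ∀ᶠ k in atBot, dist (F f k y₁) (x k) ≤ 2 * β / 3 :=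
    (eventually_dist_le_add_of_tendsto hy₁bot (by linarith) hy.1).mono fun k h => by linarith
  obtain ⟨y₂, hy₂, hy₂bot, hy₂top⟩ := exists_refine_atBot hsh hx.1 hβ hβθ hτ hτβ hy₁'
  refine ⟨y₂, cocompact_eq_atBot_atTop (α := ℤ) ▸ eventually_sup.2
    ⟨hy₂bot.mono fun k h => by linarith,
      (eventually_dist_le_add_of_tendsto hy₂top hτ hy₁top).mono fun k h => by linarith⟩,
    fun k => ?_⟩
  calc dist (F f k y₂) (F f k y) ≤ dist (F f k y₂) (F f k y₁) + dist (F f k y₁) (F f k y) :=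
        dist_triangle _ _ _
    _ ≤ 4 * θ := by linarith [hy₂ k, hy₁ k]

end Refine

theorem exists_limit_of_orbits_le_geometric [CompleteSpace X] {f : X ≃ₜ X} {u : ℕ → X} {C : ℝ}
    (hu : ∀ n k, dist (F f k (u n)) (F f k (u (n + 1))) ≤ C / 2 / 2 ^ n) :
    ∃ y, ∀ n k, dist (F f k (u n)) (F f k y) ≤ C / 2 ^ n := by
  obtain ⟨y, hy⟩ := cauchySeq_tendsto_of_complete
    (cauchySeq_of_le_geometric_two (C := C) fun n => by simpa using hu n 0)
  exact ⟨y, fun n k => dist_le_of_le_geometric_two_of_tendsto (hu · k)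
    (((continuous_F f k).tendsto y).comp hy) n⟩

theorem HasAsympLocalProduct.exists_le {f : X ≃ₜ X} (h : HasAsympLocalProduct f) {θ : ℝ}
    (hθ : 0 < θ) : ∃ β > 0, β ≤ θ ∧ AsympLocalProductAt f θ β := by
  obtain ⟨β, hβ, hβθ⟩ := h θ hθ
  exact ⟨min β θ, lt_min hβ hθ, min_le_right _ _,
    fun a b hab => hβθ a b (hab.trans (min_le_left _ _))⟩

theorem exists_limitShadows_of_refining [CompleteSpace X] {f : X ≃ₜ X} {ε : ℝ} {x : ℤ → X}
    {u : ℕ → X} {η : ℕ → ℝ} (hη : ∀ n, η n ≤ ε / 2 / 2 ^ n)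
    (hu₀ : ∀ k, dist (F f k (u 0)) (x k) ≤ ε / 2)
    (hu : ∀ n, ∀ᶠ k in cocompact ℤ, dist (F f k (u n)) (x k) ≤ η n)
    (hstep : ∀ n k, dist (F f k (u n)) (F f k (u (n + 1))) ≤ ε / 2 / 2 / 2 ^ n) :
    ∃ y, LimitShadows (F f) ε x y := by
  obtain ⟨y, hy⟩ := exists_limit_of_orbits_le_geometric hstep
  refine ⟨y, fun k => ?_, ?_⟩
  · calc dist (F f k y) (x k) ≤ dist (F f k (u 0)) (F f k y) + dist (F f k (u 0)) (x k) :=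
          dist_triangle_left _ _ _
      _ ≤ ε / 2 + ε / 2 := add_le_add ((hy 0 k).trans_eq (by norm_num)) (hu₀ k)
      _ = ε := add_halves ε
  refine tendsto_zero_of_forall_eventually_le (fun _ => dist_nonneg) (b := fun n => ε / 2 ^ n)
    ?_ fun n => ?_
  · simpa [div_eq_mul_inv] using
      (tendsto_inv_atTop_zero.comp (tendsto_pow_atTop_atTop_of_one_lt one_lt_two)).const_mul ε
  filter_upwards [hu n] with k hk
  calc dist (F f k y) (x k) ≤ dist (F f k (u n)) (F f k y) + dist (F f k (u n)) (x k) :=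
        dist_triangle_left _ _ _
    _ ≤ ε / 2 / 2 ^ n + ε / 2 / 2 ^ n := add_le_add (hy n k) (hk.trans (hη n))
    _ = ε / 2 ^ n := by ring

theorem lShadowing_of_shadowing_of_hasAsympLocalProduct [CompactSpace X] {f : X ≃ₜ X}
    (hsh : Shadowing (F f)) (hlp : HasAsympLocalProduct f) : LShadowing (F f) := by
  intro ε hε
  choose β hβ hβθ hlpβ using fun n : ℕ => hlp.exists_le (θ := ε / 2 ^ (n + 4)) (by positivity)
  obtain ⟨δ, hδ, hshδ⟩ := hsh (min (ε / 2) (β 0 / 3)) (lt_min (by positivity) (by linarith [hβ 0]))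
  refine ⟨δ / 2, by positivity, fun x ⟨hxδ, hx⟩ => ?_⟩
  obtain ⟨y₀, hy₀⟩ := hshδ x fun k => (hxδ k).trans_lt (by linarith)
  have step : ∀ n y, (∀ᶠ k in cocompact ℤ, dist (F f k y) (x k) ≤ β n / 3) →
      ∃ y', (∀ᶠ k in cocompact ℤ, dist (F f k y') (x k) ≤ β (n + 1) / 3) ∧
        ∀ k, dist (F f k y) (F f k y') ≤ ε / 2 / 2 / 2 ^ n := by
    intro n y hy
    -- `β (n + 1) / 9` makes the new tail error `3 τ` fit the next splice.
    obtain ⟨y', hy', hyy'⟩ := exists_refine hsh hx (hlpβ n) (hβθ n)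
      (τ := min (β n / 3) (β (n + 1) / 9)) (lt_min (by linarith [hβ n]) (by linarith [hβ (n + 1)]))
      (min_le_left _ _) hy
    refine ⟨y', hy'.mono fun k h => h.trans ?_,
      fun k => (dist_comm _ _).trans_le ((hyy' k).trans_eq ?_)⟩
    · linarith [min_le_right (β n / 3) (β (n + 1) / 9)]
    · rw [pow_add]; ring
  have : Nonempty X := ⟨y₀⟩
  choose! next hnext using step
  let u : ℕ → X := fun n => Nat.rec y₀ next n
  have hu : ∀ n, ∀ᶠ k in cocompact ℤ, dist (F f k (u n)) (x k) ≤ β n / 3 := by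
    intro n
    induction n with
    | zero => exact Eventually.of_forall fun k => (hy₀ k).le.trans (min_le_right _ _)
    | succ n ih => exact (hnext n (u n) ih).1
  refine exists_limitShadows_of_refining (fun n => ?_) (fun k => (hy₀ k).le.trans (min_le_left _ _))
    hu fun n => (hnext n (u n) (hu n)).2
  calc β n / 3 ≤ ε / 2 ^ (n + 4) := by linarith [hβθ n, hβ n]
    _ ≤ ε / 2 / 2 ^ n := by rw [pow_add, div_div ε 2, mul_comm (2 ^ n)]; gcongr; norm_num

theorem shadowing_of_lShadowing [CompactSpace X] {f : X ≃ₜ X} (h : LShadowing (F f)) :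
    Shadowing (F f) := by
  intro ε hε
  obtain ⟨δ, hδ, hshδ⟩ := h (ε / 2) (by positivity)
  refine ⟨δ, hδ, fun x hx => ?_⟩
  choose z hz using fun n : ℕ =>
    hshδ _ (isLimitPseudoOrbit_frozen_clamp hδ.le (fun k => (hx k).le) n)
  obtain ⟨a, -, φ, hφ, ha⟩ := isCompact_univ.tendsto_subseq (x := z) fun n => Set.mem_univ _
  refine ⟨a, fun k => lt_of_le_of_lt ?_ (half_lt_self hε)⟩
  refine le_of_tendsto ((((continuous_F f k).tendsto a).comp ha).dist tendsto_const_nhds) ?_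
  filter_upwards [hφ.tendsto_atTop.eventually_ge_atTop k.natAbs] with j hj
  have := (hz (φ j)).1 k
  rwa [frozen_of_eq (by omega)] at this

theorem hasAsympLocalProduct_of_lShadowing {f : X ≃ₜ X} (h : LShadowing (F f)) :
    HasAsympLocalProduct f := by
  intro ε hε
  obtain ⟨δ, hδ, hshδ⟩ := h (ε / 2) (by positivity)
  refine ⟨min δ (ε / 2), by positivity, fun x y hxy => ?_⟩
  obtain ⟨z, hz, hzT⟩ := hshδ _ (isLimitPseudoOrbit_join (f := f)
    ((dist_comm y x).trans_le (hxy.trans (min_le_left _ _))))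
  rw [cocompact_eq_atBot_atTop, tendsto_sup] at hzT
  have hpos : ∀ k : ℤ, 0 ≤ k → dist (F f k z) (F f k x) ≤ ε / 2 := fun k hk => by
    simpa [not_lt.2 hk] using hz k
  have hneg : ∀ k : ℤ, k < 0 → dist (F f k z) (F f k y) ≤ ε / 2 := fun k hk => by
    simpa [hk] using hz k
  refine ⟨z, ⟨?_, fun k hk => (hpos k hk).trans (half_le_self hε.le)⟩, ?_, fun k hk => ?_⟩
  · refine hzT.2.congr' ?_
    filter_upwards [eventually_ge_atTop 0] with k hk
    simp [not_lt.2 hk]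
  · refine hzT.1.congr' ?_
    filter_upwards [eventually_lt_atBot 0] with k hk
    simp [hk]
  · rcases hk.lt_or_eq with hk | rfl
    · exact (hneg k hk).trans (half_le_self hε.le)
    · calc dist (F f 0 z) (F f 0 y) ≤ dist (F f 0 z) (F f 0 x) + dist x y := by
            simpa using dist_triangle z x y
        _ ≤ ε / 2 + ε / 2 := add_le_add (hpos 0 le_rfl) (hxy.trans (min_le_right _ _))
        _ = ε := add_halves ε

end LS

/-- L-shadowing iff shadowing together with the asymptotic
local-product-structure. -/
theorem stmt_3 {X : Type*} [MetricSpace X] [CompactSpace X] (f : X ≃ₜ X) :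
    LS.LShadowing (LS.F f) ↔
      (LS.Shadowing (LS.F f) ∧
        ∀ ε > (0:ℝ), ∃ δ > (0:ℝ), ∀ x y : X, dist x y ≤ δ →
          (LS.Vs f ε x ∩ LS.Vu f ε y).Nonempty) :=
  ⟨fun h => ⟨LS.shadowing_of_lShadowing h, LS.hasAsympLocalProduct_of_lShadowing h⟩,
    fun h => LS.lShadowing_of_shadowing_of_hasAsympLocalProduct h.1 h.2⟩
end

section
/- If a homeomorphism f : X → X of a compact metric space has uniform contractions on its local stable/unstable sets, then f is asymptotically expansive. -/
open Topology Filter Metric TopologicalSpace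

/-! If `y` stays `ε`-close to `x` in both time directions, then so does `f^n y` to `f^n x`
for every `n`; in particular `f^n y ∈ W^u_ε(f^n x)`. Contracting back by `f^{-n}` for large `n`
puts `y = f^{-n}(f^n y)` in `W^u_r(x)`, so `d(y, x) ≤ r` for every `r > 0`. Hence already
`W^s_ε(x) ∩ W^u_ε(x) = {x}`. -/

namespace LS

variable {X : Type*} [MetricSpace X]

lemma hpowAux_toEquiv (f : X ≃ₜ X) (n : ℕ) :
    (hpowAux f n).toEquiv = (f.toEquiv : Equiv.Perm X) ^ n := by
  induction n with
  | zero => rfl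
  | succ n ih =>
    change (hpowAux f n).toEquiv.trans f.toEquiv = _
    rw [ih, pow_succ']
    rfl

lemma hpow_toEquiv (f : X ≃ₜ X) (k : ℤ) :
    (hpow f k).toEquiv = (f.toEquiv : Equiv.Perm X) ^ k := by
  cases k with
  | ofNat n =>
    change (hpowAux f n).toEquiv = _
    rw [hpowAux_toEquiv, Int.ofNat_eq_natCast, zpow_natCast]
  | negSucc n =>
    change (hpowAux f (n + 1)).toEquiv.symm = _
    rw [hpowAux_toEquiv, zpow_negSucc]
    rfl

lemma F_eq_zpow (f : X ≃ₜ X) (k : ℤ) : F f k = ⇑((f.toEquiv : Equiv.Perm X) ^ k) := by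
  rw [← hpow_toEquiv]
  rfl

@[simp]
lemma F_zero_apply (f : X ≃ₜ X) (y : X) : F f 0 y = y := by
  rw [F_eq_zpow, zpow_zero, Equiv.Perm.one_apply]

@[simp]
lemma F_apply_F (f : X ≃ₜ X) (a b : ℤ) (y : X) : F f a (F f b y) = F f (a + b) y := by
  rw [F_eq_zpow, F_eq_zpow, F_eq_zpow, zpow_add, Equiv.Perm.mul_apply]

lemma self_mem_Vs (f : X ≃ₜ X) {c : ℝ} (hc : 0 ≤ c) (x : X) : x ∈ Vs f c x :=
  ⟨by simp [WsA], fun _ _ => by simpa using hc⟩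

lemma self_mem_Vu (f : X ≃ₜ X) {c : ℝ} (hc : 0 ≤ c) (x : X) : x ∈ Vu f c x :=
  ⟨by simp [WuA], fun _ _ => by simpa using hc⟩

lemma F_mem_Wu_of_mem_Ws_of_mem_Wu (f : X ≃ₜ X) {c : ℝ} {x y : X} (hs : y ∈ Ws f c x)
    (hu : y ∈ Wu f c x) (n : ℤ) : F f n y ∈ Wu f c (F f n x) := by
  intro j _
  simp only [F_apply_F]
  rcases le_total 0 (j + n) with h | h
  · exact hs _ h
  · exact hu _ h

lemma Ws_inter_Wu_eq_singleton (f : X ≃ₜ X) {ε : ℝ} (hε : 0 ≤ ε)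
    (hcontr : ∀ r > (0:ℝ), ∃ n : ℕ, ∀ x : X,
      F f (-(n:ℤ)) '' Wu f ε x ⊆ Wu f r (F f (-(n:ℤ)) x))
    (x : X) : Ws f ε x ∩ Wu f ε x = {x} := by
  refine Set.Subset.antisymm ?_ (by simp [Ws, Wu, hε])
  rintro y ⟨hs, hu⟩
  refine eq_of_forall_dist_le fun r hr => ?_
  obtain ⟨n, hn⟩ := hcontr r hr
  have hy : F f (-(n:ℤ)) (F f n y) ∈ Wu f r (F f (-(n:ℤ)) (F f n x)) :=
    hn _ ⟨_, F_mem_Wu_of_mem_Ws_of_mem_Wu f hs hu n, rfl⟩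
  simpa using hy 0 le_rfl

end LS

theorem stmt_7_general {X : Type*} [MetricSpace X] (f : X ≃ₜ X)
    (huc : ∃ ε > (0:ℝ), ∀ r > (0:ℝ), ∃ k : ℕ, ∀ x : X, ∀ n : ℕ, k ≤ n →
      (LS.F f n '' LS.Ws f ε x ⊆ LS.Ws f r (LS.F f n x)) ∧
      (LS.F f (-(n:ℤ)) '' LS.Wu f ε x ⊆ LS.Wu f r (LS.F f (-(n:ℤ)) x))) :
    ∃ ε > (0:ℝ), ∀ x : X, LS.Vs f ε x ∩ LS.Vu f ε x = {x} := by
  obtain ⟨ε, hε, H⟩ := huc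
  have hcontr : ∀ r > (0:ℝ), ∃ n : ℕ, ∀ x : X,
      LS.F f (-(n:ℤ)) '' LS.Wu f ε x ⊆ LS.Wu f r (LS.F f (-(n:ℤ)) x) := fun r hr => by
    obtain ⟨k, hk⟩ := H r hr
    exact ⟨k, fun x => (hk x k le_rfl).2⟩
  refine ⟨ε, hε, fun x => Set.Subset.antisymm ?_ ?_⟩
  · rw [← LS.Ws_inter_Wu_eq_singleton f hε.le hcontr x]
    exact Set.inter_subset_inter Set.inter_subset_right Set.inter_subset_right
  · exact Set.singleton_subset_iff.2 ⟨LS.self_mem_Vs f hε.le x, LS.self_mem_Vu f hε.le x⟩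

/-- uniform contractions on local stable/unstable sets imply asymptotic
expansiveness. -/
theorem stmt_7 {X : Type*} [MetricSpace X] [CompactSpace X] (f : X ≃ₜ X)
    (huc : ∃ ε > (0:ℝ), ∀ r > (0:ℝ), ∃ k : ℕ, ∀ x : X, ∀ n : ℕ, k ≤ n →
      (LS.F f n '' LS.Ws f ε x ⊆ LS.Ws f r (LS.F f n x)) ∧
      (LS.F f (-(n:ℤ)) '' LS.Wu f ε x ⊆ LS.Wu f r (LS.F f (-(n:ℤ)) x))) :
    ∃ ε > (0:ℝ), ∀ x : X, LS.Vs f ε x ∩ LS.Vu f ε x = {x} :=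
  stmt_7_general f huc
end
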